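/- arXiv:1602.04317 — 6 statements merged into one kernel-verified Lean document; each statement's English description precedes it below -/
import Mathlib

section
/- For every positive integer S, the product ∏_{s=1}^{S} (2s+1)/(2s) satisfies √((2/π)(2S+1)) ≤ ∏_{s=1}^{S} (2s+1)/(2s) ≤ (2S+1)/√(Sπ). -/
/-!
Write `P S = ∏_{s=1}^{S} (2s+1)/(2s)` and let `W S = ∏_{i<S} (2i+2)²/((2i+1)(2i+3))` be the
partial Wallis product. Telescoping gives `P S ^ 2 * W S = 2S + 1`, and the classical bounds
`(2S+1)/(2S+2) · π/2 ≤ W S ≤ π/2` turn this into `2(2S+1)/π ≤ P S ^ 2 ≤ 4(S+1)/π`; the upper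
bound is then weakened to `(2S+1)²/(Sπ)` using `4S(S+1) ≤ (2S+1)²`.
-/

open Real Real.Wallis Finset

noncomputable def oddOverEvenProd (S : ℕ) : ℝ :=
  ∏ s ∈ Icc 1 S, ((2 * (s : ℝ) + 1) / (2 * s))

lemma oddOverEvenProd_pos (S : ℕ) : 0 < oddOverEvenProd S :=
  prod_pos fun s hs => by
    have : (0 : ℝ) < s := by exact_mod_cast (mem_Icc.mp hs).1
    positivity

lemma oddOverEvenProd_sq_mul_W (S : ℕ) : oddOverEvenProd S ^ 2 * W S = 2 * S + 1 := by
  induction S with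
  | zero => simp [oddOverEvenProd, W]
  | succ n ih =>
    rw [oddOverEvenProd, prod_Icc_succ_top (by omega), W_succ, mul_pow, ← oddOverEvenProd]
    push_cast
    set a := (2 * ((n : ℝ) + 1) + 1) / (2 * ((n : ℝ) + 1)) with ha
    set b := (2 * (n : ℝ) + 2) / (2 * n + 1) * ((2 * n + 2) / (2 * n + 3)) with hb
    have step : a ^ 2 * b * (2 * n + 1) = 2 * ((n : ℝ) + 1) + 1 := by
      rw [ha, hb]
      field_simp
      ring
    linear_combination a ^ 2 * b * ih + step

lemma oddOverEvenProd_sq_eq_div_W (S : ℕ) : oddOverEvenProd S ^ 2 = (2 * S + 1) / W S :=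
  eq_div_of_mul_eq (W_pos S).ne' (oddOverEvenProd_sq_mul_W S)

lemma two_div_pi_mul_le_oddOverEvenProd_sq (S : ℕ) :
    2 / π * (2 * S + 1) ≤ oddOverEvenProd S ^ 2 := by
  rw [oddOverEvenProd_sq_eq_div_W, div_mul_eq_mul_div, mul_comm, ← div_div_eq_mul_div]
  exact div_le_div_of_nonneg_left (by positivity) (W_pos S) (W_le S)

lemma oddOverEvenProd_sq_le (S : ℕ) : oddOverEvenProd S ^ 2 ≤ 4 * (S + 1) / π := by
  calc oddOverEvenProd S ^ 2 ≤ (2 * S + 1) / ((2 * S + 1) / (2 * S + 2) * (π / 2)) := by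
        rw [oddOverEvenProd_sq_eq_div_W]
        exact div_le_div_of_nonneg_left (by positivity) (by positivity) (le_W S)
    _ = 4 * (S + 1) / π := by
        field_simp
        ring

theorem wallis_type_estimates (S : ℕ) (hS : 1 ≤ S) :
    Real.sqrt ((2 / Real.pi) * (2 * S + 1)) ≤
      ∏ s ∈ Finset.Icc 1 S, ((2 * (s : ℝ) + 1) / (2 * s)) ∧
    ∏ s ∈ Finset.Icc 1 S, ((2 * (s : ℝ) + 1) / (2 * s)) ≤
      (2 * S + 1) / Real.sqrt (S * Real.pi) := by
  have hP_nonneg := (oddOverEvenProd_pos S).le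
  have hSpi : 0 < (S : ℝ) * π := by positivity
  refine ⟨(sqrt_le_left hP_nonneg).mpr (two_div_pi_mul_le_oddOverEvenProd_sq S), ?_⟩
  have hsq : oddOverEvenProd S ^ 2 ≤ (2 * S + 1) ^ 2 / (S * π) := by
    refine (oddOverEvenProd_sq_le S).trans ?_
    rw [div_le_div_iff₀ pi_pos hSpi]
    nlinarith [pi_pos]
  calc oddOverEvenProd S ≤ √((2 * S + 1) ^ 2 / (S * π)) := (le_sqrt hP_nonneg (by positivity)).mpr hsq
    _ = (2 * S + 1) / √(S * π) := by rw [sqrt_div' _ hSpi.le, sqrt_sq (by positivity)]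
end

section
/- Let f(x) = x/log x and let k ≥ e⁴ be real. Then for every integer j ≥ 1 and every real x in the interval [jk, (j + 1/2)k], we have f'(x) − f'(x + k/2) > (1/2) · log(1 + k/(2x)) / (log x · log(x + k/2)). -/
/-! With `g t = 1/t - 1/t²` we have `f' x = g (log x)`, and
`g a - g b = (b - a)(ab - a - b)/(a²b²)`. Since `log (1 + k/(2x)) = log (x + k/2) - log x`, the claim
reduces to `ab - a - b > ab/2`, i.e. `(a - 2)(b - 2) > 4`, which holds for `4 ≤ a < b`; here
`a = log x ≥ log k ≥ 4`. -/

lemma one_div_sub_one_div_sq_sub_eq (a b : ℝ) (ha : a ≠ 0) (hb : b ≠ 0) :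
    (1 / a - 1 / a ^ 2) - (1 / b - 1 / b ^ 2) = (b - a) * (a * b - a - b) / (a ^ 2 * b ^ 2) := by
  field_simp
  ring

lemma half_div_mul_lt_one_div_sub_one_div_sq_sub {a b : ℝ} (ha : 4 ≤ a) (hab : a < b) :
    (1 / 2) * (b - a) / (a * b) < (1 / a - 1 / a ^ 2) - (1 / b - 1 / b ^ 2) := by
  have ha0 : 0 < a := by linarith
  have hb0 : 0 < b := by linarith
  have hprod : 4 < (a - 2) * (b - 2) := by nlinarith
  rw [one_div_sub_one_div_sq_sub_eq a b ha0.ne' hb0.ne',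
    div_lt_div_iff₀ (by positivity) (by positivity)]
  nlinarith [mul_pos (mul_pos ha0 hb0) (mul_pos (sub_pos.mpr hab) (sub_pos.mpr hprod))]

lemma Real.log_one_add_div_eq_sub {x h : ℝ} (hx : 0 < x) (hxh : 0 < x + h) :
    Real.log (1 + h / x) = Real.log (x + h) - Real.log x := by
  rw [← Real.log_div hxh.ne' hx.ne', add_div, div_self hx.ne']

theorem deriv_difference_lower_bound_general (k : ℝ) (hk : Real.exp 4 ≤ k) (j : ℕ) (hj : 1 ≤ j)
    (x : ℝ) (hx₁ : (j : ℝ) * k ≤ x) :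
    (1 / Real.log x - 1 / (Real.log x) ^ 2) -
      (1 / Real.log (x + k / 2) - 1 / (Real.log (x + k / 2)) ^ 2) >
    (1 / 2) * Real.log (1 + k / (2 * x)) / (Real.log x * Real.log (x + k / 2)) := by
  have hk0 : 0 < k := (Real.exp_pos 4).trans_le hk
  have hkx : k ≤ x := le_trans (le_mul_of_one_le_left hk0.le (by exact_mod_cast hj)) hx₁
  have hx0 : 0 < x := hk0.trans_le hkx
  have hxk : x < x + k / 2 := by linarith
  have hlog : Real.log (1 + k / (2 * x)) = Real.log (x + k / 2) - Real.log x := by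
    rw [← Real.log_one_add_div_eq_sub hx0 (hx0.trans hxk)]
    ring_nf
  have hlog4 : 4 ≤ Real.log x := by
    rw [← Real.log_exp 4]
    exact Real.log_le_log (Real.exp_pos 4) (hk.trans hkx)
  rw [hlog]
  exact half_div_mul_lt_one_div_sub_one_div_sq_sub hlog4 (Real.log_lt_log hx0 hxk)

theorem deriv_difference_lower_bound (k : ℝ) (hk : Real.exp 4 ≤ k) (j : ℕ) (hj : 1 ≤ j)
    (x : ℝ) (hx₁ : (j : ℝ) * k ≤ x) (hx₂ : x ≤ ((j : ℝ) + 1 / 2) * k) :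
    (1 / Real.log x - 1 / (Real.log x) ^ 2) -
      (1 / Real.log (x + k / 2) - 1 / (Real.log (x + k / 2)) ^ 2) >
    (1 / 2) * Real.log (1 + k / (2 * x)) / (Real.log x * Real.log (x + k / 2)) :=
  deriv_difference_lower_bound_general k hk j hj x hx₁
end

section
/- Let k ≥ e⁴ be real, let x_j = jk and x̄_j = (j + 1/2)k, and define E'_j(k) = 2 f(x̄_j) − f(x_j) − f(x_{j+1}) with f(x) = x/log x. Then for all natural numbers 1 ≤ a ≤ b, (8/k) · ∑_{j=a}^{b} E'_j(k) > log((4b+6)/(9a)) / log²((b+1)k). -/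
/-! On `[x_j, x_{j+1}]` we have `log x ≥ 4`, hence
`f''(x) = (2 - log x) / (x log³ x) ≤ -1 / (2 x log² x) ≤ -c` with `c = 1 / (2 x_{j+1} log² x_{j+1})`.
So `f + c x² / 2` is concave there, and comparing it at `x̄_j` with its chord gives
`E'_j ≥ c k² / 4 = k / (8 (j + 1) log² ((j + 1) k))`. Bounding every logarithm by `log ((b + 1) k)`
leaves `∑ 1 / (j + 1) ≥ log ((b + 2) / (a + 1)) > log ((4b + 6) / (9a))`. -/

noncomputable def f (x : ℝ) : ℝ := x / Real.log x

open Real Set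

noncomputable def Eprime (k : ℝ) (j : ℕ) : ℝ :=
  2 * f (((j : ℝ) + 1 / 2) * k) - f ((j : ℝ) * k) - f (((j : ℝ) + 1) * k)

theorem le_two_mul_midpoint_sub_of_hasDerivAt2_le {g g' g'' : ℝ → ℝ} {X Y c : ℝ} (hXY : X ≤ Y)
    (hg : ContinuousOn g (Icc X Y)) (hg' : ∀ x ∈ Ioo X Y, HasDerivAt g (g' x) x)
    (hg'' : ∀ x ∈ Ioo X Y, HasDerivAt g' (g'' x) x) (hc : ∀ x ∈ Ioo X Y, g'' x ≤ -c) :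
    c * (Y - X) ^ 2 / 4 ≤ 2 * g ((X + Y) / 2) - g X - g Y := by
  have hconc : ConcaveOn ℝ (Icc X Y) (fun x ↦ g x + c / 2 * x ^ 2) := by
    refine concaveOn_of_hasDerivWithinAt2_nonpos (f' := fun x ↦ g' x + c * x)
      (f'' := fun x ↦ g'' x + c) (convex_Icc X Y) (hg.add (by fun_prop)) ?_ ?_ ?_ <;>
      rw [interior_Icc] <;> intro x hx
    · exact ((hg' x hx).add ((hasDerivAt_pow 2 x).const_mul (c / 2))
        |>.congr_deriv (by push_cast; ring)).hasDerivWithinAt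
    · exact ((hg'' x hx).add ((hasDerivAt_id x).const_mul c)
        |>.congr_deriv (by simp)).hasDerivWithinAt
    · linarith [hc x hx]
  have hmid := hconc.2 (left_mem_Icc.2 hXY) (right_mem_Icc.2 hXY) (by norm_num : (0 : ℝ) ≤ 1 / 2)
    (by norm_num : (0 : ℝ) ≤ 1 / 2) (by norm_num)
  simp only [smul_eq_mul] at hmid
  rw [show 1 / 2 * X + 1 / 2 * Y = (X + Y) / 2 by ring] at hmid
  nlinarith [hmid]

theorem hasDerivAt_f {x : ℝ} (hx : 1 < x) :
    HasDerivAt f ((log x - 1) / log x ^ 2) x := by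
  have hlx : log x ≠ 0 := (log_pos hx).ne'
  refine ((hasDerivAt_id x).div (hasDerivAt_log (by positivity)) hlx).congr_deriv ?_
  field_simp
  simp only [id]
  ring

theorem hasDerivAt_deriv_f {x : ℝ} (hx : 1 < x) :
    HasDerivAt (fun y ↦ (log y - 1) / log y ^ 2) ((2 - log x) / (x * log x ^ 3)) x := by
  have hlx : log x ≠ 0 := (log_pos hx).ne'
  have hx0 : x ≠ 0 := by positivity
  refine (((hasDerivAt_log hx0).sub_const 1).div ((hasDerivAt_log hx0).pow 2)
    (pow_ne_zero 2 hlx)).congr_deriv ?_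
  simp only [Pi.pow_apply]
  field_simp
  ring

theorem second_deriv_f_le {x Y : ℝ} (hx0 : 0 < x) (hx : 4 ≤ log x) (hxY : x ≤ Y) :
    (2 - log x) / (x * log x ^ 3) ≤ -(1 / (2 * Y * log Y ^ 2)) := by
  have hlog : log x ≤ log Y := log_le_log hx0 hxY
  calc (2 - log x) / (x * log x ^ 3) ≤ -(log x / 2) / (x * log x ^ 3) := by
        gcongr; linarith
    _ = -(1 / (2 * x * log x ^ 2)) := by field_simp
    _ ≤ -(1 / (2 * Y * log Y ^ 2)) := by
        gcongr
        linarith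

theorem sq_sub_div_le_f_midpoint_gap {X Y : ℝ} (hX : exp 4 ≤ X) (hXY : X ≤ Y) :
    (Y - X) ^ 2 / (8 * Y * log Y ^ 2) ≤ 2 * f ((X + Y) / 2) - f X - f Y := by
  have h1X : 1 < X := lt_of_lt_of_le (by linarith [add_one_le_exp (4 : ℝ)]) hX
  have hlog : ∀ x ∈ Ioo X Y, 4 ≤ log x := fun x hx ↦
    (le_log_iff_exp_le (by linarith [hx.1])).2 (hX.trans hx.1.le)
  have key := le_two_mul_midpoint_sub_of_hasDerivAt2_le (c := 1 / (2 * Y * log Y ^ 2)) hXY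
    (fun x hx ↦ (hasDerivAt_f (h1X.trans_le hx.1)).continuousAt.continuousWithinAt)
    (fun x hx ↦ hasDerivAt_f (h1X.trans hx.1)) (fun x hx ↦ hasDerivAt_deriv_f (h1X.trans hx.1))
    (fun x hx ↦ second_deriv_f_le (by linarith [hx.1]) (hlog x hx) hx.2.le)
  convert key using 1
  field_simp
  ring

theorem inv_mul_log_sq_le_Eprime {k : ℝ} (hk : exp 4 ≤ k) {j : ℕ} (hj : 1 ≤ j) :
    1 / ((j + 1) * log ((j + 1) * k) ^ 2) ≤ 8 / k * Eprime k j := by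
  have hk0 : 0 < k := (exp_pos 4).trans_le hk
  have hj1 : (1 : ℝ) ≤ j := by exact_mod_cast hj
  have hgap := sq_sub_div_le_f_midpoint_gap (X := j * k) (Y := (j + 1) * k)
    (hk.trans (by nlinarith)) (by nlinarith)
  rw [show ((j : ℝ) * k + (j + 1) * k) / 2 = (j + 1 / 2) * k by ring,
    show ((j + 1 : ℝ) * k - j * k) ^ 2 / (8 * ((j + 1) * k) * log ((j + 1) * k) ^ 2)
      = k / 8 * (1 / ((j + 1) * log ((j + 1) * k) ^ 2)) by field_simp; ring] at hgap
  calc 1 / ((j + 1) * log ((j + 1) * k) ^ 2)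
      = 8 / k * (k / 8 * (1 / ((j + 1) * log ((j + 1) * k) ^ 2))) := by field_simp
    _ ≤ 8 / k * Eprime k j := by gcongr; exact hgap

theorem log_add_one_div_le_inv {x : ℝ} (hx : 0 < x) : log ((x + 1) / x) ≤ 1 / x := by
  calc log ((x + 1) / x) ≤ (x + 1) / x - 1 := log_le_sub_one_of_pos (by positivity)
    _ = 1 / x := by field_simp; ring

theorem log_div_le_sum_Icc_inv {a b : ℕ} (hab : a ≤ b) :
    log ((b + 2) / (a + 1)) ≤ ∑ j ∈ Finset.Icc a b, 1 / ((j : ℝ) + 1) := by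
  induction b, hab using Nat.le_induction with
  | base =>
    simpa [add_assoc, one_add_one_eq_two] using
      log_add_one_div_le_inv (x := (a : ℝ) + 1) (by positivity)
  | succ n hn ih =>
    rw [Finset.sum_Icc_succ_top (by omega), Nat.cast_succ,
      show ((n : ℝ) + 1 + 2) / (a + 1) = ((n + 2) + 1) / (n + 2) * ((n + 2) / (a + 1)) by
        field_simp; ring,
      log_mul (by positivity) (by positivity)]
    have := log_add_one_div_le_inv (x := (n : ℝ) + 2) (by positivity)
    rw [show (n : ℝ) + 1 + 1 = n + 2 by ring]
    linarith

theorem sum_Ej_prime_lower_bound (k : ℝ) (hk : Real.exp 4 ≤ k) (a b : ℕ)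
    (ha : 1 ≤ a) (hab : a ≤ b) :
    (8 / k) * ∑ j ∈ Finset.Icc a b,
        (2 * f (((j : ℝ) + 1 / 2) * k) - f ((j : ℝ) * k) - f (((j : ℝ) + 1) * k)) >
      Real.log ((4 * b + 6) / (9 * a)) / (Real.log (((b : ℝ) + 1) * k)) ^ 2 := by
  have hk1 : 1 < k := (one_lt_exp_iff.2 (by norm_num)).trans_le hk
  have ha1 : (1 : ℝ) ≤ a := by exact_mod_cast ha
  have hb : (a : ℝ) ≤ b := by exact_mod_cast hab
  have hlog_pos : ∀ j : ℕ, 0 < log ((j + 1) * k) := fun j ↦ log_pos (by nlinarith)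
  have hlog_le : ∀ j ∈ Finset.Icc a b, log ((j + 1) * k) ≤ log ((b + 1) * k) := fun j hj ↦
    log_le_log (by positivity) (by gcongr; exact_mod_cast (Finset.mem_Icc.1 hj).2)
  calc log ((4 * b + 6) / (9 * a)) / log ((b + 1) * k) ^ 2
      < log ((b + 2) / (a + 1)) / log ((b + 1) * k) ^ 2 := by
        have := hlog_pos b
        gcongr ?_ / _
        refine log_lt_log (by positivity) ?_
        rw [div_lt_div_iff₀ (by positivity) (by positivity)]
        nlinarith
    _ ≤ (∑ j ∈ Finset.Icc a b, 1 / ((j : ℝ) + 1)) / log ((b + 1) * k) ^ 2 := by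
        gcongr
        exact log_div_le_sum_Icc_inv hab
    _ = ∑ j ∈ Finset.Icc a b, 1 / ((j + 1) * log ((b + 1) * k) ^ 2) := by
        simp only [Finset.sum_div, div_div]
    _ ≤ ∑ j ∈ Finset.Icc a b, 1 / ((j + 1) * log ((j + 1) * k) ^ 2) := by
        refine Finset.sum_le_sum fun j hj ↦ ?_
        have := hlog_pos j
        gcongr 1 / (_ * ?_ ^ 2)
        exact hlog_le j hj
    _ ≤ ∑ j ∈ Finset.Icc a b, 8 / k * Eprime k j :=
        Finset.sum_le_sum fun j hj ↦ inv_mul_log_sq_le_Eprime hk (ha.trans (Finset.mem_Icc.1 hj).1)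
    _ = _ := by rw [Finset.mul_sum]; rfl
end

section
/- For natural numbers 1 ≤ a ≤ b, the product ∏_{s=a}^{b} (2(s+1)+1)/(2(s+1)) is bounded below by √((4b+6)/(9a)). -/
/-!
Since `(2k+1)² ≥ 4k(k+1)`, the square of each factor `(2k+1)/(2k)` is at least `(k+1)/k`.
These lower bounds telescope over `k = a+1, …, b+1` to `(b+2)/(a+1)`, which for `a ≥ 1`
dominates `(4b+6)/(9a)`.
-/

open Finset

theorem Finset.prod_Icc_div_of_ne_zero {K : Type*} [Field K] {m n : ℕ} (hmn : m ≤ n)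
    (f : ℕ → K) (hf : ∀ i, f i ≠ 0) :
    ∏ i ∈ Icc m n, f (i + 1) / f i = f (n + 1) / f m := by
  have h := congrArg Units.val (prod_Icc_div hmn fun i ↦ Units.mk0 (f i) (hf i))
  simpa only [Units.coe_prod, Units.val_div_eq_div_val, Units.val_mk0] using h

theorem add_one_div_self_le_sq {k : ℝ} (hk : 0 < k) :
    (k + 1) / k ≤ ((2 * k + 1) / (2 * k)) ^ 2 := by
  rw [div_pow, div_le_div_iff₀ hk (by positivity)]
  nlinarith [sq_nonneg k]

theorem wallis_product_lower_bound (a b : ℕ) (ha : 1 ≤ a) (hab : a ≤ b) :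
    ∏ s ∈ Finset.Icc a b, ((2 * ((s : ℝ) + 1) + 1) / (2 * ((s : ℝ) + 1))) ≥
      Real.sqrt ((4 * b + 6) / (9 * a)) := by
  have ha' : (1 : ℝ) ≤ a := by exact_mod_cast ha
  have htelescope := prod_Icc_div_of_ne_zero hab (fun i : ℕ ↦ (i : ℝ) + 1) fun i ↦ by positivity
  push_cast at htelescope
  rw [ge_iff_le, Real.sqrt_le_iff]
  refine ⟨prod_nonneg fun s _ ↦ by positivity, ?_⟩
  calc (4 * (b : ℝ) + 6) / (9 * a)
      ≤ ((b : ℝ) + 2) / (a + 1) := by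
        rw [div_le_div_iff₀ (by positivity) (by positivity)]
        nlinarith
    _ = ∏ s ∈ Icc a b, ((s : ℝ) + 1 + 1) / ((s : ℝ) + 1) := by rw [htelescope]; ring
    _ ≤ ∏ s ∈ Icc a b, ((2 * ((s : ℝ) + 1) + 1) / (2 * ((s : ℝ) + 1))) ^ 2 :=
        prod_le_prod (fun s _ ↦ by positivity) fun s _ ↦ add_one_div_self_le_sq (by positivity)
    _ = _ := prod_pow _ _ _
end

section
/- Define ε(x) = √(8·log x/(17π·η))·exp(−√(log x / η)) with η = 6.455. Assume |θ(t) − t| < t·ε(t) for all t ≥ 149, where θ is the Chebyshev function. Then for all real k ≥ 298 and every integer j ≥ 1, writing x_j = jk and x̄_j = (j+1/2)k: ∫_{x_j}^{x̄_j} θ(τ)/(τ·log²τ) dτ − ∫_{x̄_j}^{x_{j+1}} θ(τ)/(τ·log²τ) dτ > −k·ε(x̄_j)/log²(x̄_j). -/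
/-- The Chebyshev function `θ(x) = ∑_{p ≤ x} log p`. -/
noncomputable def chebyshevTheta (x : ℝ) : ℝ :=
  ∑ p ∈ (Finset.range (⌊x⌋₊ + 1)).filter Nat.Prime, Real.log p

/-- Trudgian's error function `ε(x)`. -/
noncomputable def eps (x : ℝ) : ℝ :=
  Real.sqrt (8 * Real.log x / (17 * Real.pi * 6.455)) *
    Real.exp (-Real.sqrt (Real.log x / 6.455))

/-!
Write `f τ = θ τ / (τ log² τ)`, `h = 1 / log²` and `g = ε / log²`, so that the hypothesis
says `|f - h| < g`. Shifting the first integral by `k/2`, the left-hand side becomes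
`∫_{x̄_j}^{x_{j+1}} (f (τ - k/2) - f τ) dτ`, and pointwise
`f (τ - k/2) - f τ ≥ (h (τ - k/2) - h τ) - g (τ - k/2) - g τ`.
As `g` is decreasing, `g τ ≤ g x̄_j`; the excess `g (τ - k/2) - g x̄_j` is controlled by
`|g' x| = ε x (3 + √(log x / 6.455)) / (2 x log³ x) ≤ 3 / (5 x log³ x)`, and it is beaten
by the drop of `h`, whose slope is at least `2 / (x log³ x)` in absolute value, because
`x_{j+1} log³ x_{j+1} ≤ 3 x_j log³ x_j`.
-/

open Real Set MeasureTheory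

theorem chebyshevTheta_mono : Monotone chebyshevTheta := by
  intro x y hxy
  refine Finset.sum_le_sum_of_subset_of_nonneg ?_ fun p hp _ => ?_
  · exact Finset.filter_subset_filter _ (by gcongr)
  · exact log_nonneg (by exact_mod_cast (Finset.mem_filter.1 hp).2.one_lt.le)

theorem Monotone.intervalIntegrable_div_mul_log_sq {φ : ℝ → ℝ} (hφ : Monotone φ) {a b : ℝ}
    (ha : 1 < a) (hab : a ≤ b) :
    IntervalIntegrable (fun τ => φ τ / (τ * log τ ^ 2)) volume a b := by
  have hcont : ContinuousOn (fun τ => (τ * log τ ^ 2)⁻¹) (uIcc a b) := by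
    intro t ht
    rw [uIcc_of_le hab] at ht
    have ht1 : 1 < t := ha.trans_le ht.1
    have ht0 : t ≠ 0 := by positivity
    have hL : log t ≠ 0 := (log_pos ht1).ne'
    exact (ContinuousAt.inv₀ (by fun_prop (disch := assumption))
      (by positivity)).continuousWithinAt
  simpa only [div_eq_mul_inv] using hφ.intervalIntegrable.mul_continuousOn hcont

theorem abs_div_mul_log_sq_sub_inv_le {y t e : ℝ} (ht : 1 < t) (h : |y - t| ≤ t * e) :
    |y / (t * log t ^ 2) - (log t ^ 2)⁻¹| ≤ e / log t ^ 2 := by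
  have hL : 0 < log t := log_pos ht
  have ht0 : 0 < t := by linarith
  rw [show y / (t * log t ^ 2) - (log t ^ 2)⁻¹ = (y - t) / (t * log t ^ 2) by field_simp,
    abs_div, abs_of_pos (a := t * log t ^ 2) (by positivity),
    div_le_div_iff₀ (by positivity) (by positivity)]
  calc |y - t| * log t ^ 2 ≤ t * e * log t ^ 2 := by gcongr
    _ = e * (t * log t ^ 2) := by ring

theorem mul_log_pow_three_le {a b : ℝ} (ha : 256 ≤ a) (hab : a ≤ b) (hb : b ≤ 2 * a) :
    b * log b ^ 3 ≤ 3 * (a * log a ^ 3) := by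
  have hlog256 : log 256 = 8 * log 2 := by
    rw [show (256 : ℝ) = 2 ^ 8 by norm_num, log_pow]; norm_num
  have hLa : 5.545 ≤ log a := by
    linarith [log_le_log (by norm_num) ha, log_two_gt_d9]
  have hLb : log b ≤ log a + 0.6932 := by
    have := log_le_log (by linarith) hb
    rw [log_mul (by norm_num) (by linarith)] at this
    linarith [log_two_lt_d9]
  have hLb0 : 0 ≤ log b := log_nonneg (by linarith)
  have hcube : log b ^ 3 ≤ 1.5 * log a ^ 3 := by
    calc log b ^ 3 ≤ (log a + 0.6932) ^ 3 := by gcongr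
      _ ≤ 1.5 * log a ^ 3 := by nlinarith [sq_nonneg (log a - 5.545)]
  calc b * log b ^ 3 ≤ (2 * a) * (1.5 * log a ^ 3) := by gcongr
    _ = 3 * (a * log a ^ 3) := by ring

theorem image_sub_le_mul_sub_of_hasDerivAt_le {f f' : ℝ → ℝ} {x y C : ℝ} (hxy : x ≤ y)
    (hf : ∀ t ∈ Icc x y, HasDerivAt f (f' t) t) (hC : ∀ t ∈ Ioo x y, f' t ≤ C) :
    f y - f x ≤ C * (y - x) := by
  refine (convex_Icc x y).image_sub_le_mul_sub_of_deriv_le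
    (fun t ht => (hf t ht).continuousAt.continuousWithinAt)
    (fun t ht => ?_) (fun t ht => ?_) x (left_mem_Icc.2 hxy) y (right_mem_Icc.2 hxy) hxy
  · rw [interior_Icc] at ht
    exact (hf t (Ioo_subset_Icc_self ht)).differentiableAt.differentiableWithinAt
  · rw [interior_Icc] at ht
    rw [(hf t (Ioo_subset_Icc_self ht)).deriv]
    exact hC t ht

theorem hasDerivAt_inv_log_sq {x : ℝ} (hx : 1 < x) :
    HasDerivAt (fun y => (log y ^ 2)⁻¹) (-(2 / (x * log x ^ 3))) x := by
  have hx0 : x ≠ 0 := by positivity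
  have hL : 0 < log x := log_pos hx
  refine (((hasDerivAt_log hx0).fun_pow 2).inv (by positivity)).congr_deriv ?_
  field_simp
  ring

theorem inv_log_sq_sub_ge {x y b : ℝ} (hx : 1 < x) (hxy : x ≤ y) (hyb : y ≤ b) :
    2 / (b * log b ^ 3) * (y - x) ≤ (log x ^ 2)⁻¹ - (log y ^ 2)⁻¹ := by
  have hdec := image_sub_le_mul_sub_of_hasDerivAt_le (C := -(2 / (b * log b ^ 3))) hxy
    (fun t ht => hasDerivAt_inv_log_sq (hx.trans_le ht.1))
    (fun t ht => by
      have ht1 : 1 < t := hx.trans ht.1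
      have := log_pos ht1
      have : t * log t ^ 3 ≤ b * log b ^ 3 := by gcongr <;> linarith [ht.2]
      gcongr)
  linarith

theorem eps_eq (x : ℝ) :
    eps x = √(8 / (17 * π)) * √(log x / 6.455) * exp (-√(log x / 6.455)) := by
  rw [eps, ← sqrt_mul (by positivity)]
  congr 2
  ring

theorem eps_nonneg (x : ℝ) : 0 ≤ eps x := by
  unfold eps
  positivity

theorem mul_three_add_mul_exp_neg_le {s : ℝ} (hs : 0 ≤ s) : s * (3 + s) * exp (-s) ≤ 3 := by
  rw [exp_neg, ← div_eq_mul_inv, div_le_iff₀ (exp_pos s)]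
  nlinarith [quadratic_le_exp_of_nonneg hs]

theorem eps_mul_three_add_sqrt_le (x : ℝ) : eps x * (3 + √(log x / 6.455)) ≤ 6 / 5 := by
  set s := √(log x / 6.455)
  have hc : √(8 / (17 * π)) ≤ 2 / 5 := by
    rw [sqrt_le_iff, div_le_iff₀ (by positivity)]
    constructor <;> nlinarith [pi_gt_three]
  calc eps x * (3 + s) = √(8 / (17 * π)) * (s * (3 + s) * exp (-s)) := by rw [eps_eq]; ring
    _ ≤ 2 / 5 * 3 := by gcongr; exact mul_three_add_mul_exp_neg_le (sqrt_nonneg _)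
    _ = 6 / 5 := by norm_num

theorem hasDerivAt_sqrt_log_div {x η : ℝ} (hx : 1 < x) (hη : 0 < η) :
    HasDerivAt (fun y => √(log y / η)) (√(log x / η) / (2 * x * log x)) x := by
  have hL : 0 < log x := log_pos hx
  refine (((hasDerivAt_log (by positivity)).div_const η).sqrt (by positivity)).congr_deriv ?_
  have hs2 : √(log x / η) ^ 2 = log x / η := sq_sqrt (by positivity)
  field_simp
  rw [hs2]
  field_simp

theorem hasDerivAt_eps {x : ℝ} (hx : 1 < x) :
    HasDerivAt eps (eps x * (1 - √(log x / 6.455)) / (2 * x * log x)) x := by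
  have hs := hasDerivAt_sqrt_log_div hx (η := 6.455) (by norm_num)
  rw [show eps = fun y => √(8 / (17 * π)) * √(log y / 6.455) * exp (-√(log y / 6.455)) from
    funext eps_eq]
  refine ((hs.const_mul _).mul hs.fun_neg.exp).congr_deriv ?_
  beta_reduce
  ring

theorem hasDerivAt_eps_div_log_sq {x : ℝ} (hx : 1 < x) :
    HasDerivAt (fun y => eps y / log y ^ 2)
      (-(eps x * (3 + √(log x / 6.455)) / (2 * x * log x ^ 3))) x := by
  have hx0 : x ≠ 0 := by positivity
  have hL : 0 < log x := log_pos hx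
  refine ((hasDerivAt_eps hx).div ((hasDerivAt_log hx0).fun_pow 2)
    (by positivity)).congr_deriv ?_
  field_simp
  ring

theorem eps_div_log_sq_antitoneOn : AntitoneOn (fun x => eps x / log x ^ 2) (Ioi 1) := by
  refine antitoneOn_of_hasDerivWithinAt_nonpos (convex_Ioi 1)
    (fun x hx => (hasDerivAt_eps_div_log_sq hx).continuousAt.continuousWithinAt)
    (fun x hx => (hasDerivAt_eps_div_log_sq (interior_Ioi.subset hx)).hasDerivWithinAt)
    (fun x hx => ?_)
  have hx : 1 < x := interior_Ioi.subset hx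
  have := log_pos hx
  have := eps_nonneg x
  rw [neg_nonpos]
  positivity

theorem eps_div_log_sq_sub_le {a x y : ℝ} (ha : 1 < a) (hax : a ≤ x) (hxy : x ≤ y) :
    eps x / log x ^ 2 - eps y / log y ^ 2 ≤ 3 / 5 / (a * log a ^ 3) * (y - x) := by
  have hneg := image_sub_le_mul_sub_of_hasDerivAt_le (f := fun t => -(eps t / log t ^ 2))
    (C := 3 / 5 / (a * log a ^ 3)) hxy
    (fun t ht => (hasDerivAt_eps_div_log_sq (ha.trans_le (hax.trans ht.1))).neg)
    (fun t ht => by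
      have ht1 : 1 < t := ha.trans_le (hax.trans ht.1.le)
      have := log_pos ha
      calc -(-(eps t * (3 + √(log t / 6.455)) / (2 * t * log t ^ 3)))
          ≤ 6 / 5 / (2 * t * log t ^ 3) := by
            rw [neg_neg]; have := log_pos ht1; gcongr; exact eps_mul_three_add_sqrt_le t
        _ = 3 / 5 / (t * log t ^ 3) := by ring
        _ ≤ 3 / 5 / (a * log a ^ 3) := by gcongr <;> linarith [ht.1])
  linarith

theorem mul_le_integral_sub_integral_of_le_sub_shift {F : ℝ → ℝ} {a δ c : ℝ} (hδ : 0 ≤ δ)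
    (hF₁ : IntervalIntegrable F volume a (a + δ))
    (hF₂ : IntervalIntegrable F volume (a + δ) (a + 2 * δ))
    (h : ∀ τ ∈ Icc (a + δ) (a + 2 * δ), c ≤ F (τ - δ) - F τ) :
    δ * c ≤ (∫ τ in a..a + δ, F τ) - ∫ τ in a + δ..a + 2 * δ, F τ := by
  have hF₁' : IntervalIntegrable (fun τ => F (τ - δ)) volume (a + δ) (a + 2 * δ) := by
    simpa only [add_assoc, ← two_mul] using hF₁.comp_sub_right δ
  have hshift : (∫ τ in a + δ..a + 2 * δ, F (τ - δ)) = ∫ τ in a..a + δ, F τ := by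
    rw [intervalIntegral.integral_comp_sub_right]
    congr 1 <;> ring
  have hmono := intervalIntegral.integral_mono_on (by linarith) intervalIntegrable_const
    (hF₁'.sub hF₂) h
  rw [intervalIntegral.integral_sub hF₁' hF₂, hshift, intervalIntegral.integral_const,
    smul_eq_mul] at hmono
  convert hmono using 1
  ring

theorem le_sub_shift_of_abs_sub_inv_log_sq_le {F : ℝ → ℝ} {a δ τ : ℝ} (ha : 256 ≤ a)
    (hδa : 2 * δ ≤ a)
    (hF : ∀ t ∈ Icc a (a + 2 * δ), |F t - (log t ^ 2)⁻¹| ≤ eps t / log t ^ 2)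
    (hτ : τ ∈ Icc (a + δ) (a + 2 * δ)) :
    -(2 * (eps (a + δ) / log (a + δ) ^ 2)) + δ / (5 * ((a + 2 * δ) * log (a + 2 * δ) ^ 3)) ≤
      F (τ - δ) - F τ := by
  set m := a + δ
  set b := a + 2 * δ
  obtain ⟨hmτ, hτb⟩ := hτ
  have hδ : 0 ≤ δ := by linarith
  obtain ⟨hFσ, -⟩ := abs_le.1 (hF (τ - δ) ⟨by linarith, by linarith⟩)
  obtain ⟨-, hFτ⟩ := abs_le.1 (hF τ ⟨by linarith, hτb⟩)
  have hgap := inv_log_sq_sub_ge (x := τ - δ) (by linarith) (by linarith) hτb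
  have hgσ := eps_div_log_sq_sub_le (a := a) (x := τ - δ) (y := m)
    (by linarith) (by linarith) (by linarith)
  have hgτ : eps τ / log τ ^ 2 ≤ eps m / log m ^ 2 :=
    eps_div_log_sq_antitoneOn (show 1 < m by linarith) (show 1 < τ by linarith) hmτ
  have hP : 0 < a * log a ^ 3 := by have := log_pos (by linarith : 1 < a); positivity
  have hQ : 0 < b * log b ^ 3 := by have := log_pos (by linarith : 1 < b); positivity
  have hPQ : 3 / 5 / (a * log a ^ 3) ≤ 9 / 5 / (b * log b ^ 3) := by
    rw [show (3 / 5 : ℝ) / (a * log a ^ 3) = 9 / 5 / (3 * (a * log a ^ 3)) by field_simp; norm_num]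
    exact div_le_div_of_nonneg_left (by norm_num) hQ
      (mul_log_pow_three_le ha (by linarith) (by linarith))
  have hshort : m - (τ - δ) ≤ δ := by linarith
  have hexcess := mul_le_mul hPQ hshort (by linarith) (by positivity)
  have hsplit : δ / (5 * (b * log b ^ 3)) =
      2 / (b * log b ^ 3) * (τ - (τ - δ)) - 9 / 5 / (b * log b ^ 3) * δ := by
    field_simp; ring
  linarith

theorem integral_difference_lower_bound
    (hθ : ∀ t : ℝ, 149 ≤ t → |chebyshevTheta t - t| < t * eps t)
    (k : ℝ) (hk : 298 ≤ k) (j : ℕ) (hj : 1 ≤ j) :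
    (∫ τ in ((j : ℝ) * k)..(((j : ℝ) + 1 / 2) * k),
        chebyshevTheta τ / (τ * (Real.log τ) ^ 2)) -
      (∫ τ in (((j : ℝ) + 1 / 2) * k)..(((j : ℝ) + 1) * k),
        chebyshevTheta τ / (τ * (Real.log τ) ^ 2)) >
    -(k * eps (((j : ℝ) + 1 / 2) * k) / (Real.log (((j : ℝ) + 1 / 2) * k)) ^ 2) := by
  have hj1 : (1 : ℝ) ≤ j := by exact_mod_cast hj
  have ha : 298 ≤ (j : ℝ) * k := by nlinarith
  rw [show ((j : ℝ) + 1 / 2) * k = j * k + k / 2 by ring,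
    show ((j : ℝ) + 1) * k = j * k + 2 * (k / 2) by ring]
  have hF : ∀ t ∈ Icc (j * k : ℝ) (j * k + 2 * (k / 2)),
      |chebyshevTheta t / (t * log t ^ 2) - (log t ^ 2)⁻¹| ≤ eps t / log t ^ 2 :=
    fun t ht => abs_div_mul_log_sq_sub_inv_le (by linarith [ht.1])
      (hθ t (by linarith [ht.1])).le
  have hint := fun x y (hx : (j : ℝ) * k ≤ x) (hxy : x ≤ y) =>
    chebyshevTheta_mono.intervalIntegrable_div_mul_log_sq (b := y) (by linarith) hxy
  have hdiff := mul_le_integral_sub_integral_of_le_sub_shift (by linarith)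
    (hint _ _ le_rfl (by linarith)) (hint _ _ (by linarith) (by linarith))
    fun τ hτ => le_sub_shift_of_abs_sub_inv_log_sq_le (by linarith) (by nlinarith) hF hτ
  have hL := log_pos (show 1 < (j : ℝ) * k + 2 * (k / 2) by linarith)
  have hmargin :
      0 < k / 2 * (k / 2 / (5 * ((j * k + 2 * (k / 2)) * log (j * k + 2 * (k / 2)) ^ 3))) := by
    positivity
  rw [gt_iff_lt, mul_div_assoc]
  linarith
end

section
/- Let x₋ ≤ x₊ be reals with x₋ ≥ 149, and define Δ̃(x₋,x₊) = (1 − x₋/x₊)·(1+ε(x₋))/log²x₋ − x₋/x₊ + 2ε(x₋), where ε(x) = √(8 log x/(17π·6.455))·e^{−√(log x/6.455)}. If x₊/x₋ ≤ 1 + C·x₋^{−d} for constants C, d > 0, then there is an explicitly computable constant C₁ > 0 (depending only on C and d) such that 1 + Δ̃(x₋, x₊) < C₁·ε(x₋) for all sufficiently large x₋. -/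
open Real Filter Asymptotics

noncomputable def deltaTilde (xm xp : ℝ) : ℝ :=
  (1 - xm / xp) * (1 + eps xm) / log xm ^ 2 - xm / xp + 2 * eps xm

lemma tendsto_mul_sub_sqrt_div_atTop {c d : ℝ} (hc : 0 < c) (hd : 0 < d) :
    Tendsto (fun t => d * t - √(t / c)) atTop atTop := by
  have hhalf : Tendsto (fun t => d / 2 * t) atTop atTop :=
    tendsto_id.const_mul_atTop (by positivity)
  refine tendsto_atTop_mono' atTop ?_ hhalf
  filter_upwards [eventually_ge_atTop (4 / (c * d ^ 2))] with t ht
  have ht0 : 0 < t := lt_of_lt_of_le (by positivity) ht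
  have hsq : √(t / c) ≤ d / 2 * t := by
    rw [Real.sqrt_le_iff, div_le_iff₀ hc]
    rw [div_le_iff₀ (by positivity)] at ht
    exact ⟨by positivity, by nlinarith⟩
  linarith

lemma eventually_exp_neg_sqrt_le_eps :
    ∀ᶠ x in atTop, exp (-√(log x / 6.455)) ≤ eps x := by
  filter_upwards [tendsto_log_atTop.eventually_ge_atTop (17 * π * 6.455 / 8)] with x hx
  have hone : 1 ≤ √(8 * log x / (17 * π * 6.455)) := by
    rw [Real.one_le_sqrt, one_le_div (by positivity)]
    linarith [(div_le_iff₀' (by norm_num : (0:ℝ) < 8)).1 hx]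
  exact le_mul_of_one_le_left (exp_pos _).le hone

lemma rpow_neg_isLittleO_eps {d : ℝ} (hd : 0 < d) : (fun x : ℝ => x ^ (-d)) =o[atTop] eps := by
  have hexp : (fun x => exp (log x * -d)) =o[atTop] fun x => exp (-√(log x / 6.455)) :=
    isLittleO_exp_comp_exp_comp.2 <|
      ((tendsto_mul_sub_sqrt_div_atTop (c := 6.455) (by norm_num) hd).comp tendsto_log_atTop).congr
        fun x => by simp only [Function.comp]; ring
  have hrpow : (fun x : ℝ => x ^ (-d)) =ᶠ[atTop] fun x => exp (log x * -d) := by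
    filter_upwards [eventually_gt_atTop 0] with x hx using rpow_def_of_pos hx _
  have hbound : (fun x => exp (-√(log x / 6.455))) =O[atTop] eps :=
    IsBigO.of_bound 1 <| by
      filter_upwards [eventually_exp_neg_sqrt_le_eps] with x hx
      rw [one_mul, norm_of_nonneg (exp_pos _).le, norm_of_nonneg ((exp_pos _).le.trans hx)]
      exact hx
  exact (hexp.congr' hrpow.symm EventuallyEq.rfl).trans_isBigO hbound

lemma one_add_deltaTilde_le {xm xp : ℝ} (hxm : 0 < xm) (hle : xm ≤ xp) (heps : 0 ≤ eps xm)
    (hlog : 1 ≤ log xm) : 1 + deltaTilde xm xp ≤ 2 * (xp / xm - 1) + 3 * eps xm := by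
  have hxp : 0 < xp := hxm.trans_le hle
  set v := 1 - xm / xp
  have hv0 : 0 ≤ v := sub_nonneg.2 ((div_le_one hxp).2 hle)
  have hv1 : v ≤ 1 := sub_le_self 1 (by positivity)
  have hv : v ≤ xp / xm - 1 := by
    calc v = (xp - xm) / xp := by rw [sub_div, div_self hxp.ne']
      _ ≤ (xp - xm) / xm := div_le_div_of_nonneg_left (by linarith) hxm hle
      _ = xp / xm - 1 := by field_simp
  have hfrac : v * (1 + eps xm) / log xm ^ 2 ≤ v + eps xm := by
    calc v * (1 + eps xm) / log xm ^ 2 ≤ v * (1 + eps xm) :=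
          div_le_self (by positivity) (one_le_pow₀ hlog)
      _ ≤ v + eps xm := by nlinarith
  unfold deltaTilde
  linarith

theorem one_add_delta_lt_eps (C d : ℝ) (hC : 0 < C) (hd : 0 < d) :
    ∃ C₁ : ℝ, 0 < C₁ ∧ ∃ X : ℝ, 149 ≤ X ∧
      ∀ xm xp : ℝ, X ≤ xm → xm ≤ xp → xp / xm ≤ 1 + C * xm ^ (-d) →
        1 + ((1 - xm / xp) * (1 + eps xm) / (Real.log xm) ^ 2 - xm / xp + 2 * eps xm) <
          C₁ * eps xm := by
  have hsmall := (rpow_neg_isLittleO_eps hd).bound (c := 1 / (2 * C)) (by positivity)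
  obtain ⟨X, hX⟩ := eventually_atTop.1 <| hsmall.and <| eventually_exp_neg_sqrt_le_eps.and <|
    (eventually_gt_atTop 0).and (tendsto_log_atTop.eventually_ge_atTop 1)
  refine ⟨5, by norm_num, max X 149, le_max_right _ _, fun xm xp hxm hle hratio => ?_⟩
  obtain ⟨hrpow, hexp_le, hpos, hlog⟩ := hX xm (le_of_max_le_left hxm)
  have heps : 0 < eps xm := (exp_pos _).trans_le hexp_le
  have hCrpow : 2 * (C * xm ^ (-d)) ≤ eps xm := by
    rw [norm_of_nonneg (by positivity), norm_of_nonneg heps.le] at hrpow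
    rw [← le_div_iff₀' two_pos, mul_comm]
    calc xm ^ (-d) * C ≤ 1 / (2 * C) * eps xm * C := by gcongr
      _ = eps xm / 2 := by field_simp
  calc 1 + deltaTilde xm xp ≤ 2 * (xp / xm - 1) + 3 * eps xm :=
        one_add_deltaTilde_le hpos hle heps.le hlog
    _ ≤ 4 * eps xm := by linarith
    _ < 5 * eps xm := by linarith
end
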